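/- arXiv:1103.4306 — 3 statements merged into one kernel-verified Lean document; each statement's English description precedes it below -/
import Mathlib

section
/- Let α > 2 be an even integer. Then, as θ → 0⁺, ∫_{-∞}^{∞} x^{α-1} e^{iθx}/(1 + |x|^{1+α}) dx ∼ −2iθ log θ; that is, the ratio of the integral on the left to −2iθ log θ converges to 1 as θ → 0⁺. -/
/-!
Write `α = n + 1` with `n` odd and `f x = x ^ n / (1 + |x| ^ (n + 2))`. Since `f` is odd and
integrable, its Fourier integral is `2 i ∫₀^∞ f(x) sin(θx) dx`, and the substitution
`u = θ x` turns this into `2 i θ J(θ ^ (n + 2))` with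
`J(c) = ∫₀^∞ uⁿ sin u / (c + u ^ (n + 2)) du`.
On `(0, 1]` we have `sin u = u + O(u³)`, and `∫₀¹ u ^ (n + 1) / (c + u ^ (n + 2)) du` is
`(log (1 + c) - log c) / (n + 2)` exactly; the remainder and the tail over `(1, ∞)` are bounded
uniformly in `c ∈ (0, 1]`. Hence `J(θ ^ (n + 2)) = -log θ + O(1)`.
-/

open MeasureTheory Filter Real Set Topology Asymptotics

theorem tendsto_div_nhds_one_of_abs_sub_le {α : Type*} {l : Filter α} {f g : α → ℝ} {C : ℝ}
    (hg : Tendsto g l atTop) (hfg : ∀ᶠ x in l, |f x - g x| ≤ C) :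
    Tendsto (fun x => f x / g x) l (𝓝 1) := by
  have hbdd : (f - g) =O[l] fun _ => (1 : ℝ) :=
    .of_bound C (hfg.mono fun x hx => by simpa using hx)
  have hequiv : f ~[l] g :=
    hbdd.trans_isLittleO ((isLittleO_one_left_iff ℝ).2 (tendsto_abs_atTop_atTop.comp hg))
  exact (isEquivalent_iff_tendsto_one (hg.eventually_ne_atTop 0)).1 hequiv

section Parity
variable {f : ℝ → ℝ}

theorem integral_eq_zero_of_odd (hf : ∀ x, f (-x) = -f x) : ∫ x, f x = 0 := by
  have h := integral_neg_eq_self f volume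
  simp only [hf, integral_neg] at h
  linarith

theorem integral_eq_two_mul_integral_Ioi_of_even (hf : ∀ x, f (-x) = f x) :
    ∫ x, f x = 2 * ∫ x in Ioi 0, f x := by
  have habs : ∀ x, f |x| = f x := fun x => by
    rcases abs_choice x with h | h <;> simp [h, hf]
  simp_rw [← integral_comp_abs, habs]

theorem integral_mul_exp_I_of_odd (hf : ∀ x, f (-x) = -f x) (hfi : Integrable f) (θ : ℝ) :
    ∫ x, (f x : ℂ) * Complex.exp (Complex.I * θ * x) =
      2 * Complex.I * ∫ x in Ioi 0, f x * sin (θ * x) := by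
  have hcos : Integrable fun x => f x * cos (θ * x) :=
    hfi.mul_bdd (by fun_prop) (ae_of_all _ fun x => (norm_eq_abs _).trans_le (abs_cos_le_one _))
  have hsin : Integrable fun x => f x * sin (θ * x) :=
    hfi.mul_bdd (by fun_prop) (ae_of_all _ fun x => (norm_eq_abs _).trans_le (abs_sin_le_one _))
  have hsplit (x : ℝ) : (f x : ℂ) * Complex.exp (Complex.I * θ * x) =
      ((f x * cos (θ * x) : ℝ) : ℂ) + ((f x * sin (θ * x) : ℝ) : ℂ) * Complex.I := by
    rw [show Complex.I * θ * x = ((θ * x : ℝ) : ℂ) * Complex.I by push_cast; ring,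
      Complex.exp_mul_I]
    push_cast
    ring
  simp_rw [hsplit]
  rw [integral_add hcos.ofReal (hsin.ofReal.mul_const _), integral_mul_const,
    integral_complex_ofReal, integral_complex_ofReal, integral_eq_zero_of_odd fun x => by simp [hf],
    integral_eq_two_mul_integral_Ioi_of_even fun x => by simp [hf]]
  push_cast
  ring

end Parity

section PowKernel
variable (n : ℕ)

theorem pow_le_one_add_pow_add_two {t : ℝ} (ht : 0 ≤ t) : t ^ n ≤ 1 + t ^ (n + 2) := by
  rcases le_total t 1 with h | h
  · linarith [pow_le_one₀ (n := n) ht h, pow_nonneg ht (n + 2)]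
  · linarith [pow_le_pow_right₀ h (n.le_add_right 2)]

theorem integrable_pow_div_one_add_abs_pow :
    Integrable fun x : ℝ => x ^ n / (1 + |x| ^ (n + 2)) := by
  have hden (x : ℝ) : 0 < 1 + |x| ^ (n + 2) := by positivity
  refine (integrable_inv_one_add_sq.const_mul 2).mono'
    ((continuous_pow n).div (by fun_prop) fun x => (hden x).ne').aestronglyMeasurable
    (ae_of_all _ fun x => ?_)
  have hsq : |x| ^ n * x ^ 2 = |x| ^ (n + 2) := by rw [← sq_abs, ← pow_add]
  rw [norm_div, norm_pow, norm_eq_abs, norm_of_nonneg (hden x).le, div_le_iff₀ (hden x)]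
  field_simp
  nlinarith [pow_le_one_add_pow_add_two n (abs_nonneg x)]

theorem integral_Ioi_pow_mul_comp_mul_div (g : ℝ → ℝ) {θ : ℝ} (hθ : 0 < θ) :
    ∫ x in Ioi 0, x ^ n * g (θ * x) / (1 + x ^ (n + 2)) =
      θ * ∫ u in Ioi 0, u ^ n * g u / (θ ^ (n + 2) + u ^ (n + 2)) := by
  have hscale : ∀ x ∈ Ioi (0 : ℝ), x ^ n * g (θ * x) / (1 + x ^ (n + 2)) =
      θ ^ 2 * ((θ * x) ^ n * g (θ * x) / (θ ^ (n + 2) + (θ * x) ^ (n + 2))) :=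
    fun x (hx : 0 < x) => by
    field_simp
    ring
  rw [setIntegral_congr_fun measurableSet_Ioi hscale, integral_comp_mul_left_Ioi
      (fun u => θ ^ 2 * (u ^ n * g u / (θ ^ (n + 2) + u ^ (n + 2)))) 0 hθ, mul_zero,
    integral_const_mul, smul_eq_mul]
  field_simp

end PowKernel

noncomputable def sinKernelIntegral (n : ℕ) (c : ℝ) : ℝ :=
  ∫ u in Ioi 0, u ^ n * sin u / (c + u ^ (n + 2))

section SinKernel
variable (n : ℕ) {c : ℝ}

theorem norm_pow_mul_sin_div_le_rpow (hc : 0 ≤ c) {u : ℝ} (hu : 0 < u) :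
    ‖u ^ n * sin u / (c + u ^ (n + 2))‖ ≤ u ^ (-2 : ℝ) := by
  have hpow : u ^ (-2 : ℝ) = u ^ n / u ^ (n + 2) := by
    rw [rpow_neg hu.le, pow_add, div_mul_cancel_left₀ (by positivity)]
    norm_cast
  have hden : 0 ≤ c + u ^ (n + 2) := add_nonneg hc (by positivity)
  rw [hpow, norm_div, norm_mul, norm_pow, norm_of_nonneg hu.le, norm_eq_abs (sin u),
    norm_of_nonneg hden]
  gcongr
  · exact mul_le_of_le_one_right (by positivity) (abs_sin_le_one u)
  · linarith

theorem integrableOn_Ioi_one_pow_mul_sin_div (hc : 0 ≤ c) :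
    IntegrableOn (fun u => u ^ n * sin u / (c + u ^ (n + 2))) (Ioi 1) := by
  refine (integrableOn_Ioi_rpow_of_lt (by norm_num : (-2 : ℝ) < -1) one_pos).mono' ?_
    ((ae_restrict_iff' measurableSet_Ioi).2 (ae_of_all _ fun u (hu : 1 < u) =>
      norm_pow_mul_sin_div_le_rpow n hc (one_pos.trans hu)))
  refine ContinuousOn.aestronglyMeasurable ?_ measurableSet_Ioi
  exact ContinuousOn.div (by fun_prop) (by fun_prop) fun u (hu : 1 < u) => by
    have : 0 < u := one_pos.trans hu
    positivity

theorem abs_integral_Ioi_one_pow_mul_sin_div_le (hc : 0 ≤ c) :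
    |∫ u in Ioi 1, u ^ n * sin u / (c + u ^ (n + 2))| ≤ 1 := by
  have hmaj := norm_integral_le_of_norm_le (integrableOn_Ioi_rpow_of_lt
      (by norm_num : (-2 : ℝ) < -1) one_pos)
    ((ae_restrict_iff' measurableSet_Ioi).2 (ae_of_all _ fun u (hu : 1 < u) =>
      norm_pow_mul_sin_div_le_rpow n hc (one_pos.trans hu)))
  rw [integral_Ioi_rpow_of_lt (by norm_num) one_pos] at hmaj
  norm_num at hmaj
  exact hmaj

theorem integral_pow_succ_div_add_pow (hc : 0 < c) :
    ∫ u in (0 : ℝ)..1, u ^ (n + 1) / (c + u ^ (n + 2)) = (log (c + 1) - log c) / (n + 2) := by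
  have hden (u : ℝ) (hu : 0 ≤ u) : 0 < c + u ^ (n + 2) := by positivity
  have hderiv : ∀ u ∈ uIcc (0 : ℝ) 1,
      HasDerivAt (fun v => log (c + v ^ (n + 2)) / (n + 2))
        (u ^ (n + 1) / (c + u ^ (n + 2))) u := by
    intro u hu
    rw [uIcc_of_le zero_le_one] at hu
    refine ((((hasDerivAt_pow (n + 2) u).const_add c).log (hden u hu.1).ne').div_const
      ((n : ℝ) + 2)).congr_deriv ?_
    rw [show n + 2 - 1 = n + 1 from rfl]
    push_cast
    field_simp
  rw [intervalIntegral.integral_eq_sub_of_hasDerivAt hderiv]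
  · simp [sub_div]
  · refine ContinuousOn.intervalIntegrable ?_
    rw [uIcc_of_le zero_le_one]
    exact ContinuousOn.div (by fun_prop) (by fun_prop) fun u hu => (hden u hu.1).ne'

theorem abs_integral_pow_mul_sin_sub_self_div_le (hc : 0 ≤ c) :
    |∫ u in (0 : ℝ)..1, u ^ n * (sin u - u) / (c + u ^ (n + 2))| ≤ 1 := by
  have h := intervalIntegral.norm_integral_le_of_norm_le_const (a := 0) (b := 1) (C := 1)
    (f := fun u => u ^ n * (sin u - u) / (c + u ^ (n + 2))) fun u hu => by
      rw [uIoc_of_le zero_le_one] at hu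
      obtain ⟨hu0, hu1⟩ := hu
      have hsin : |sin u - u| ≤ u ^ 3 := by
        rw [abs_of_nonpos (by linarith [sin_lt hu0])]
        nlinarith [sin_gt_sub_cube hu0, pow_pos hu0 3]
      rw [norm_div, norm_mul, norm_pow, norm_of_nonneg hu0.le, norm_eq_abs,
        norm_of_nonneg (by positivity), div_le_one (by positivity)]
      calc u ^ n * |sin u - u| ≤ u ^ n * u ^ 3 := by gcongr
        _ = u ^ (n + 2) * u := by ring
        _ ≤ u ^ (n + 2) := mul_le_of_le_one_right (by positivity) hu1
        _ ≤ c + u ^ (n + 2) := by linarith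
  simpa using h

theorem abs_sinKernelIntegral_add_log_div_le (hc0 : 0 < c) (hc1 : c ≤ 1) :
    |sinKernelIntegral n c + log c / (n + 2)| ≤ 3 := by
  have hden (u : ℝ) (hu : 0 ≤ u) : 0 < c + u ^ (n + 2) := by positivity
  have hint (g : ℝ → ℝ) (hg : Continuous g) :
      IntervalIntegrable (fun u => g u / (c + u ^ (n + 2))) volume 0 1 := by
    refine ContinuousOn.intervalIntegrable ?_
    rw [uIcc_of_le zero_le_one]
    exact hg.continuousOn.div (by fun_prop) fun u hu => (hden u hu.1).ne'
  have hsplit : sinKernelIntegral n c =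
      (∫ u in (0 : ℝ)..1, u ^ (n + 1) / (c + u ^ (n + 2))) +
        (∫ u in (0 : ℝ)..1, u ^ n * (sin u - u) / (c + u ^ (n + 2))) +
          ∫ u in Ioi 1, u ^ n * sin u / (c + u ^ (n + 2)) := by
    rw [sinKernelIntegral, ← intervalIntegral.integral_interval_add_Ioi'
      (hint _ (by fun_prop)) (integrableOn_Ioi_one_pow_mul_sin_div n hc0.le),
      ← intervalIntegral.integral_add (hint _ (by fun_prop)) (hint _ (by fun_prop))]
    congr 2
    ext u
    ring
  have hlog : |log (c + 1) / (n + 2)| ≤ 1 := by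
    have hlog_le : log (c + 1) ≤ 1 := by
      linarith [log_le_sub_one_of_pos (by linarith : 0 < c + 1)]
    rw [abs_div, abs_of_nonneg (log_nonneg (by linarith)), abs_of_pos (by positivity),
      div_le_one (by positivity)]
    linarith
  rw [hsplit, integral_pow_succ_div_add_pow n hc0]
  calc _ = |log (c + 1) / (n + 2) +
        (∫ u in (0 : ℝ)..1, u ^ n * (sin u - u) / (c + u ^ (n + 2))) +
          ∫ u in Ioi 1, u ^ n * sin u / (c + u ^ (n + 2))| := by ring_nf
    _ ≤ 1 + 1 + 1 := (abs_add_three _ _ _).trans (by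
      gcongr
      exacts [abs_integral_pow_mul_sin_sub_self_div_le n hc0.le,
        abs_integral_Ioi_one_pow_mul_sin_div_le n hc0.le])
    _ = 3 := by norm_num

theorem tendsto_sinKernelIntegral_pow_div_neg_log :
    Tendsto (fun θ => sinKernelIntegral n (θ ^ (n + 2)) / -log θ) (𝓝[>] 0) (𝓝 1) := by
  refine tendsto_div_nhds_one_of_abs_sub_le (C := 3)
    (tendsto_neg_atBot_atTop.comp tendsto_log_nhdsGT_zero) ?_
  filter_upwards [Ioo_mem_nhdsGT one_pos] with θ ⟨hθ0, hθ1⟩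
  have h := abs_sinKernelIntegral_add_log_div_le n (pow_pos hθ0 (n + 2))
    (pow_le_one₀ hθ0.le hθ1.le)
  rwa [log_pow, Nat.cast_add, Nat.cast_two, mul_div_cancel_left₀ _ (by positivity),
    ← sub_neg_eq_add] at h

end SinKernel

theorem integral_pow_mul_exp_div_one_add_abs_pow {n : ℕ} (hn : Odd n) {θ : ℝ} (hθ : 0 < θ) :
    ∫ x : ℝ, ((x : ℂ) ^ n * Complex.exp (Complex.I * θ * x)) /
        ((1 + |x| ^ (n + 2) : ℝ) : ℂ) =
      2 * Complex.I * θ * sinKernelIntegral n (θ ^ (n + 2)) := by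
  have hodd (x : ℝ) : (-x) ^ n / (1 + |-x| ^ (n + 2)) = -(x ^ n / (1 + |x| ^ (n + 2))) := by
    rw [hn.neg_pow, abs_neg, neg_div]
  have hpos : ∀ x ∈ Ioi (0 : ℝ), x ^ n / (1 + |x| ^ (n + 2)) * sin (θ * x) =
      x ^ n * sin (θ * x) / (1 + x ^ (n + 2)) := fun x (hx : 0 < x) => by
    rw [abs_of_pos hx]
    ring
  have hreal (x : ℝ) : ((x : ℂ) ^ n * Complex.exp (Complex.I * θ * x)) /
      ((1 + |x| ^ (n + 2) : ℝ) : ℂ) =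
      ((x ^ n / (1 + |x| ^ (n + 2)) : ℝ) : ℂ) * Complex.exp (Complex.I * θ * x) := by
    push_cast
    ring
  simp_rw [hreal]
  rw [integral_mul_exp_I_of_odd hodd (integrable_pow_div_one_add_abs_pow n),
    setIntegral_congr_fun measurableSet_Ioi hpos, integral_Ioi_pow_mul_comp_mul_div n sin hθ,
    sinKernelIntegral]
  push_cast
  ring

/-- For an even integer `α > 2`, as `θ → 0⁺`,
`∫ x, x^(α-1) e^{iθx} / (1 + |x|^(1+α)) dx ∼ -2iθ log θ`. -/
theorem pareto_even_integral_asymptotic (α : ℕ) (hα : 2 < α) (heven : Even α) :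
    Tendsto (fun θ : ℝ =>
        (∫ x : ℝ, ((x : ℂ) ^ (α - 1) * Complex.exp (Complex.I * θ * x)) /
            ((1 + |x| ^ (1 + α) : ℝ) : ℂ)) /
          (-2 * Complex.I * (θ : ℂ) * ((Real.log θ : ℝ) : ℂ)))
      (nhdsWithin 0 (Set.Ioi 0)) (nhds 1) := by
  obtain ⟨n, rfl⟩ : ∃ n, α = n + 1 := ⟨α - 1, by omega⟩
  have hn : Odd n := Nat.not_even_iff_odd.1 (Nat.even_add_one.1 heven)
  rw [Nat.add_sub_cancel, show 1 + (n + 1) = n + 2 by ring]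
  have hlim : Tendsto (fun θ => (sinKernelIntegral n (θ ^ (n + 2)) / -log θ : ℂ))
      (𝓝[>] 0) (𝓝 1) := by
    exact_mod_cast (tendsto_sinKernelIntegral_pow_div_neg_log n).ofReal
  refine hlim.congr' ?_
  filter_upwards [Ioo_mem_nhdsGT one_pos] with θ ⟨hθ0, hθ1⟩
  have hθ : (θ : ℂ) ≠ 0 := Complex.ofReal_ne_zero.2 hθ0.ne'
  have hlog : (log θ : ℂ) ≠ 0 := Complex.ofReal_ne_zero.2 (log_neg hθ0 hθ1).ne
  rw [integral_pow_mul_exp_div_one_add_abs_pow hn hθ0]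
  field_simp
end

section
/- Let α > 2 be a non-integer real number and let q = ⌊α⌋ be even. Then, as θ → 0⁺, ∫_{-∞}^{∞} x^{q}(e^{iθx} − 1)/(1 + |x|^{1+α}) dx ∼ 2 θ^{α−q} Γ(q−α) cos((q−α)π/2), where Γ denotes the Gamma function. -/
/-!
Substituting `x = u / θ` turns the integral into `θ ^ (α - q)` times
`∫ u ^ q (e^{iu} - 1) / (θ ^ (1 + α) + |u| ^ (1 + α)) du`, and with `s = q - α ∈ (-1, 0)` the
integrand is dominated by `|u| ^ (s - 1) min 2 |u|`, so as `θ → 0⁺` this tends to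
`∫ u ^ q (e^{iu} - 1) / |u| ^ (1 + α) du`. As `q` is even, that integral is
`2 Re ∫₀^∞ t ^ (s - 1) (e^{it} - 1) dt`, and the half-line integral equals `Γ(s) e^{iπs/2}`:
damp it by `e^{-εt}`, integrate by parts against `t ^ s` to reach the Gamma integrals
`∫₀^∞ t ^ s e^{-at} dt = a ^ (-s-1) Γ(s+1)` for `Re a > 0` (the real case continued analytically
in `a`), and let `ε → 0⁺`.
-/

open MeasureTheory Filter

namespace ParetoEvenPart

open Set Complex Topology ComplexConjugate

lemma norm_cexp_I_mul_sub_one_le_min (t : ℝ) : ‖cexp (I * t) - 1‖ ≤ min 2 |t| := by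
  refine le_min ?_ (by simpa using Real.norm_exp_I_mul_ofReal_sub_one_le (x := t))
  calc ‖cexp (I * t) - 1‖ ≤ ‖cexp (I * t)‖ + ‖(1 : ℂ)‖ := norm_sub_le _ _
    _ = 2 := by rw [mul_comm, norm_exp_ofReal_mul_I]; norm_num

lemma integrableOn_rpow_sub_one_mul_min {s : ℝ} (hs1 : -1 < s) (hs0 : s < 0) :
    IntegrableOn (fun t : ℝ => t ^ (s - 1) * min 2 t) (Ioi 0) := by
  have hmeas : AEStronglyMeasurable (fun t : ℝ => t ^ (s - 1) * min 2 t) := by fun_prop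
  rw [← Ioc_union_Ioi_eq_Ioi zero_le_one, integrableOn_union]
  constructor
  · have hint : IntegrableOn (fun t : ℝ => t ^ s) (Ioc 0 1) := by
      simpa [intervalIntegrable_iff_integrableOn_Ioc_of_le zero_le_one] using
        intervalIntegral.intervalIntegrable_rpow' (a := 0) (b := 1) hs1
    refine hint.mono' hmeas.restrict ?_
    filter_upwards [ae_restrict_mem measurableSet_Ioc] with t ht
    replace ht : 0 < t := ht.1
    calc ‖t ^ (s - 1) * min 2 t‖ = t ^ (s - 1) * min 2 t := by
          rw [Real.norm_of_nonneg (by positivity)]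
      _ ≤ t ^ (s - 1) * t := by gcongr; exact min_le_right _ _
      _ = t ^ s := by rw [← Real.rpow_add_one ht.ne']; ring_nf
  · refine ((integrableOn_Ioi_rpow_of_lt (a := s - 1) (by linarith) one_pos).const_mul 2).mono'
      hmeas.restrict ?_
    filter_upwards [ae_restrict_mem measurableSet_Ioi] with t (ht : 1 < t)
    calc ‖t ^ (s - 1) * min 2 t‖ = t ^ (s - 1) * min 2 t := by
          rw [Real.norm_of_nonneg (by positivity)]
      _ ≤ t ^ (s - 1) * 2 := by gcongr; exact min_le_left _ _
      _ = 2 * t ^ (s - 1) := mul_comm _ _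

lemma integrable_comp_abs {f : ℝ → ℝ} (hf : IntegrableOn f (Ioi 0)) :
    Integrable (fun x => f |x|) := by
  have hIoi : IntegrableOn (fun x => f |x|) (Ioi 0) :=
    hf.congr_fun (fun x hx => by rw [abs_of_pos hx]) measurableSet_Ioi
  have hIic : IntegrableOn (fun x => f |x|) (Iic 0) := by
    rw [← Measure.map_neg_eq_self (volume : Measure ℝ),
      measurableEmbedding_neg.integrableOn_map_iff]
    simpa [Function.comp_def, neg_Iic] using
      (integrableOn_Ici_iff_integrableOn_Ioi (f := fun x => f |x|)).mpr hIoi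
  rw [← integrableOn_univ, ← Iic_union_Ioi (a := (0 : ℝ)), integrableOn_union]
  exact ⟨hIic, hIoi⟩

lemma tendsto_rpow_nhdsGT_zero {y : ℝ} (hy : 0 < y) :
    Tendsto (fun x : ℝ => x ^ y) (𝓝[>] 0) (𝓝 0) := by
  simpa [Real.zero_rpow hy.ne'] using
    tendsto_nhdsWithin_of_tendsto_nhds (Real.continuousAt_rpow_const 0 y (Or.inr hy.le)).tendsto

lemma norm_cexp_neg_mul_ofReal (a : ℂ) (t : ℝ) : ‖cexp (-(a * t))‖ = Real.exp (-(a.re * t)) := by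
  simp [norm_exp]

lemma integrableOn_rpow_mul_cexp_neg_mul {b : ℝ} (hb : -1 < b) {a : ℂ} (ha : 0 < a.re) :
    IntegrableOn (fun t : ℝ => ((t ^ b : ℝ) : ℂ) * cexp (-(a * t))) (Ioi 0) := by
  refine (integrableOn_rpow_mul_exp_neg_mul_rpow hb one_pos ha).mono' (by fun_prop) ?_
  filter_upwards [ae_restrict_mem measurableSet_Ioi] with t (ht : 0 < t)
  rw [norm_mul, norm_cexp_neg_mul_ofReal, norm_real, Real.norm_of_nonneg (by positivity),
    Real.rpow_one, neg_mul]

lemma differentiableOn_integral_rpow_mul_cexp_neg_mul {b : ℝ} (hb : -1 < b) :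
    DifferentiableOn ℂ (fun z : ℂ => ∫ t in Ioi 0, ((t ^ b : ℝ) : ℂ) * cexp (-(z * t)))
      {z | 0 < z.re} := by
  intro z (hz : 0 < z.re)
  have hnhds : {w : ℂ | z.re / 2 < w.re} ∈ 𝓝 z :=
    (isOpen_lt continuous_const continuous_re).mem_nhds (by show z.re / 2 < z.re; linarith)
  refine (hasDerivAt_integral_of_dominated_loc_of_deriv_le (μ := volume.restrict (Ioi 0))
    (F := fun w t => ((t ^ b : ℝ) : ℂ) * cexp (-(w * t)))
    (F' := fun w t => -(((t ^ (b + 1) : ℝ) : ℂ) * cexp (-(w * t))))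
    (bound := fun t => t ^ (b + 1) * Real.exp (-(z.re / 2) * t)) hnhds
    (.of_forall fun w => by fun_prop) (integrableOn_rpow_mul_cexp_neg_mul hb hz)
    (by fun_prop) ?_ ?_ ?_).2.differentiableAt.differentiableWithinAt
  · filter_upwards [ae_restrict_mem measurableSet_Ioi] with t (ht : 0 < t) w (hw : _ < w.re)
    rw [norm_neg, norm_mul, norm_cexp_neg_mul_ofReal, norm_real,
      Real.norm_of_nonneg (by positivity)]
    gcongr
    nlinarith
  · have := integrableOn_rpow_mul_exp_neg_mul_rpow (s := b + 1) (by linarith) one_pos (half_pos hz)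
    simp only [Real.rpow_one] at this
    exact this
  · filter_upwards [ae_restrict_mem measurableSet_Ioi] with t (ht : 0 < t) w _
    have hexp : HasDerivAt (fun w : ℂ => cexp (-(w * t))) (-t * cexp (-(w * t))) w := by
      simpa [mul_comm] using ((hasDerivAt_id w).mul_const (t : ℂ)).neg.cexp
    refine (hexp.const_mul ((t ^ b : ℝ) : ℂ)).congr_deriv ?_
    rw [Real.rpow_add_one ht.ne']
    push_cast
    ring

lemma integral_rpow_mul_cexp_neg_mul {s : ℝ} (hs : 0 < s) {a : ℂ} (ha : 0 < a.re) :
    ∫ t in Ioi 0, ((t ^ (s - 1) : ℝ) : ℂ) * cexp (-(a * t)) = a ^ (-(s : ℂ)) * Gamma s := by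
  have hopen : IsOpen {z : ℂ | 0 < z.re} := isOpen_lt continuous_const continuous_re
  have hlhs := (differentiableOn_integral_rpow_mul_cexp_neg_mul
    (b := s - 1) (by linarith)).analyticOnNhd hopen
  have hrhs : AnalyticOnNhd ℂ (fun z : ℂ => z ^ (-(s : ℂ)) * Gamma s) {z | 0 < z.re} :=
    DifferentiableOn.analyticOnNhd (fun z (hz : 0 < z.re) =>
      ((differentiableAt_id.cpow_const (Or.inl hz)).mul_const _).differentiableWithinAt) hopen
  have hreal : ∀ r : ℝ, 0 < r →
      ∫ t in Ioi 0, ((t ^ (s - 1) : ℝ) : ℂ) * cexp (-(r * t)) = (r : ℂ) ^ (-(s : ℂ)) * Gamma s := by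
    intro r hr
    have := integral_cpow_mul_exp_neg_mul_Ioi (a := s) (by simpa using hs) hr
    rw [one_div, inv_cpow _ _ (by simp [arg_ofReal_of_nonneg hr.le, Real.pi_ne_zero.symm]),
      ← cpow_neg] at this
    rw [← this]
    refine setIntegral_congr_fun measurableSet_Ioi fun t (ht : 0 < t) => ?_
    rw [ofReal_cpow ht.le]
    push_cast
    rfl
  have hfreq : ∃ᶠ z in 𝓝[≠] (1 : ℂ),
      ∫ t in Ioi 0, ((t ^ (s - 1) : ℝ) : ℂ) * cexp (-(z * t)) = z ^ (-(s : ℂ)) * Gamma s := by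
    have hofReal : Tendsto ((↑) : ℝ → ℂ) (𝓝[≠] 1) (𝓝[≠] 1) :=
      continuous_ofReal.continuousWithinAt.tendsto_nhdsWithin fun _ _ ↦ by simp_all
    refine hofReal.frequently (Eventually.frequently ?_)
    filter_upwards [nhdsWithin_le_nhds (eventually_gt_nhds one_pos)] with r hr
    exact hreal r hr
  exact hlhs.eqOn_of_preconnected_of_frequently_eq hrhs
    (convex_halfSpace_re_gt 0).isPreconnected (by simp) hfreq ha

lemma norm_rpow_mul_cexp_neg_mul_mul_cexp_I_sub_one_le {b ε t : ℝ} (hε : 0 ≤ ε) (ht : 0 ≤ t) :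
    ‖((t ^ b : ℝ) : ℂ) * (cexp (-(ε * t)) * (cexp (I * t) - 1))‖ ≤ t ^ b * min 2 t := by
  rw [norm_mul, norm_mul, norm_real, Real.norm_of_nonneg (by positivity),
    ← ofReal_mul, ← ofReal_neg, norm_exp_ofReal]
  gcongr
  calc Real.exp (-(ε * t)) * ‖cexp (I * t) - 1‖ ≤ 1 * min 2 |t| := by
        gcongr
        · exact Real.exp_le_one_iff.2 (by nlinarith)
        · exact norm_cexp_I_mul_sub_one_le_min t
    _ = min 2 t := by rw [one_mul, abs_of_nonneg ht]

lemma integrableOn_rpow_sub_one_mul_cexp_neg_mul_mul_cexp_I_sub_one {s ε : ℝ} (hs1 : -1 < s)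
    (hs0 : s < 0) (hε : 0 ≤ ε) :
    IntegrableOn (fun t : ℝ => ((t ^ (s - 1) : ℝ) : ℂ) * (cexp (-(ε * t)) * (cexp (I * t) - 1)))
      (Ioi 0) := by
  refine (integrableOn_rpow_sub_one_mul_min hs1 hs0).mono' (by fun_prop) ?_
  filter_upwards [ae_restrict_mem measurableSet_Ioi] with t (ht : 0 < t)
  exact norm_rpow_mul_cexp_neg_mul_mul_cexp_I_sub_one_le hε ht.le

lemma hasDerivAt_cexp_neg_mul_ofReal (a : ℂ) (t : ℝ) :
    HasDerivAt (fun t : ℝ => cexp (-(a * t))) (-(a * cexp (-(a * t)))) t := by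
  simpa [mul_comm] using (((hasDerivAt_id (t : ℂ)).const_mul a).neg.cexp).comp_ofReal

lemma mul_integral_rpow_mul_cexp_neg_mul {s : ℝ} (hs : -1 < s) {a : ℂ} (ha : 0 < a.re) :
    a * ∫ t in Ioi 0, ((t ^ s : ℝ) : ℂ) * cexp (-(a * t)) = a ^ (-(s : ℂ)) * Gamma (s + 1) := by
  have ha0 : a ≠ 0 := fun h => by simp [h] at ha
  have := integral_rpow_mul_cexp_neg_mul (s := s + 1) (by linarith) ha
  rw [add_sub_cancel_right] at this
  rw [this, ← mul_assoc, show -(s : ℂ) = 1 + -((s + 1 : ℝ) : ℂ) by push_cast; ring,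
    cpow_add _ _ ha0, cpow_one, ofReal_add, ofReal_one]

lemma integral_rpow_mul_deriv_cexp_neg_mul_sub_cexp_neg_mul {s : ℝ} (hs : -1 < s) {a b : ℂ}
    (ha : 0 < a.re) (hb : 0 < b.re) :
    ∫ t in Ioi 0, ((t ^ s : ℝ) : ℂ) * (-(a * cexp (-(a * t))) + b * cexp (-(b * t)))
      = -(a ^ (-(s : ℂ)) - b ^ (-(s : ℂ))) * Gamma (s + 1) := by
  have hsplit : ∀ t : ℝ, ((t ^ s : ℝ) : ℂ) * (-(a * cexp (-(a * t))) + b * cexp (-(b * t)))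
      = -a * (((t ^ s : ℝ) : ℂ) * cexp (-(a * t))) + b * (((t ^ s : ℝ) : ℂ) * cexp (-(b * t))) :=
    fun t => by ring
  simp_rw [hsplit]
  rw [integral_add ((integrableOn_rpow_mul_cexp_neg_mul hs ha).const_mul _)
      ((integrableOn_rpow_mul_cexp_neg_mul hs hb).const_mul _), integral_const_mul,
    integral_const_mul, neg_mul, mul_integral_rpow_mul_cexp_neg_mul hs ha,
    mul_integral_rpow_mul_cexp_neg_mul hs hb]
  ring

lemma tendsto_rpow_mul_min_two_nhdsGT_zero {s : ℝ} (hs : -1 < s) :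
    Tendsto (fun t : ℝ => t ^ s * min 2 t) (𝓝[>] 0) (𝓝 0) := by
  refine squeeze_zero' (eventually_nhdsWithin_of_forall fun t (ht : 0 < t) =>
    mul_nonneg (by positivity) (le_min zero_le_two ht.le)) ?_
    (tendsto_rpow_nhdsGT_zero (y := s + 1) (by linarith))
  filter_upwards [self_mem_nhdsWithin] with t (ht : 0 < t)
  rw [Real.rpow_add_one ht.ne']
  gcongr
  exact min_le_right _ _

lemma tendsto_rpow_mul_min_two_atTop {s : ℝ} (hs : s < 0) :
    Tendsto (fun t : ℝ => t ^ s * min 2 t) atTop (𝓝 0) := by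
  have hpow : Tendsto (fun t : ℝ => t ^ s * 2) atTop (𝓝 0) := by
    simpa using (tendsto_rpow_neg_atTop (y := -s) (by linarith)).mul_const 2
  refine squeeze_zero' ?_ ?_ hpow
  all_goals filter_upwards [eventually_gt_atTop 0] with t ht
  · exact mul_nonneg (by positivity) (le_min zero_le_two ht.le)
  · gcongr
    exact min_le_left _ _

/-- Integration by parts against `t ^ s` reduces this to two Gamma integrals of exponent `s + 1`,
since `e^{-ε t} (e^{i t} - 1) = e^{-(ε - i) t} - e^{-ε t}`. -/
lemma integral_rpow_sub_one_mul_cexp_neg_mul_mul_cexp_I_sub_one {s ε : ℝ} (hs1 : -1 < s)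
    (hs0 : s < 0) (hε : 0 < ε) :
    ∫ t in Ioi 0, ((t ^ (s - 1) : ℝ) : ℂ) * (cexp (-(ε * t)) * (cexp (I * t) - 1))
      = Gamma s * ((ε - I) ^ (-(s : ℂ)) - (ε : ℂ) ^ (-(s : ℂ))) := by
  have hdiff : ∀ t : ℝ, cexp (-((ε - I) * t)) - cexp (-(ε * t))
      = cexp (-(ε * t)) * (cexp (I * t) - 1) := fun t => by
    rw [mul_sub, mul_one, ← Complex.exp_add]; ring_nf
  have hre₁ : 0 < ((ε : ℂ) - I).re := by simpa using hε
  have hre₂ : 0 < (ε : ℂ).re := by simpa using hε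
  have hbound : ∀ t : ℝ, 0 ≤ t →
      ‖((t ^ s : ℝ) : ℂ) * (cexp (-((ε - I) * t)) - cexp (-(ε * t)))‖ ≤ t ^ s * min 2 t :=
    fun t ht => hdiff t ▸ norm_rpow_mul_cexp_neg_mul_mul_cexp_I_sub_one_le hε.le ht
  have hparts := integral_Ioi_mul_deriv_eq_deriv_mul (a := 0) (a' := 0) (b' := 0)
    (u := fun t : ℝ => ((t ^ s : ℝ) : ℂ)) (u' := fun t => ((s * t ^ (s - 1) : ℝ) : ℂ))
    (v := fun t : ℝ => cexp (-((ε - I) * t)) - cexp (-(ε * t)))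
    (v' := fun t => -((ε - I) * cexp (-((ε - I) * t))) + ε * cexp (-(ε * t)))
    (fun t (ht : 0 < t) => (Real.hasDerivAt_rpow_const (Or.inl ht.ne')).ofReal_comp)
    (fun t _ => ((hasDerivAt_cexp_neg_mul_ofReal _ t).sub
      (hasDerivAt_cexp_neg_mul_ofReal _ t)).congr_deriv (by ring))
    (IntegrableOn.congr_fun
      (((integrableOn_rpow_mul_cexp_neg_mul hs1 hre₁).const_mul (-((ε : ℂ) - I))).add
        ((integrableOn_rpow_mul_cexp_neg_mul hs1 hre₂).const_mul (ε : ℂ)))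
      (fun t _ => by simp only [Pi.mul_apply, Pi.add_apply]; ring) measurableSet_Ioi)
    (IntegrableOn.congr_fun
      ((integrableOn_rpow_sub_one_mul_cexp_neg_mul_mul_cexp_I_sub_one hs1 hs0 hε.le).const_mul
        (s : ℂ)) (fun t _ => by simp only [Pi.mul_apply, hdiff]; push_cast; ring)
      measurableSet_Ioi)
    (squeeze_zero_norm' (eventually_nhdsWithin_of_forall fun t (ht : 0 < t) => hbound t ht.le)
      (tendsto_rpow_mul_min_two_nhdsGT_zero hs1))
    (squeeze_zero_norm' (eventually_ge_atTop 0 |>.mono hbound) (tendsto_rpow_mul_min_two_atTop hs0))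
  have hs : (s : ℂ) ≠ 0 := ofReal_ne_zero.2 hs0.ne
  rw [integral_rpow_mul_deriv_cexp_neg_mul_sub_cexp_neg_mul hs1 hre₁ hre₂,
    Gamma_add_one _ hs] at hparts
  simp_rw [hdiff, ofReal_mul, mul_assoc] at hparts
  rw [integral_const_mul] at hparts
  refine mul_left_cancel₀ hs ?_
  linear_combination hparts

lemma tendsto_ofReal_sub_I_cpow_sub_ofReal_cpow {s : ℝ} (hs : s < 0) :
    Tendsto (fun ε : ℝ => ((ε : ℂ) - I) ^ (-(s : ℂ)) - (ε : ℂ) ^ (-(s : ℂ))) (𝓝[>] 0)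
      (𝓝 (cexp (I * (Real.pi * s / 2)))) := by
  have hnegI : (-I) ^ (-(s : ℂ)) - 0 = cexp (I * (Real.pi * s / 2)) := by
    rw [sub_zero, cpow_def_of_ne_zero (neg_ne_zero.2 I_ne_zero), log_neg_I]
    ring_nf
  rw [← hnegI]
  refine Tendsto.sub (tendsto_nhdsWithin_of_tendsto_nhds ?_) ?_
  · exact (continuousAt_cpow_const (Or.inr (by simp))).tendsto.comp
      ((continuous_ofReal.sub continuous_const).tendsto' (0 : ℝ) (-I) (by simp))
  · have hpow := (continuous_ofReal.tendsto 0).comp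
      (tendsto_rpow_nhdsGT_zero (y := -s) (by linarith))
    rw [ofReal_zero] at hpow
    refine hpow.congr' (eventually_nhdsWithin_of_forall fun ε (hε : 0 < ε) => ?_)
    simp [ofReal_cpow hε.le]

lemma integral_rpow_sub_one_mul_cexp_I_sub_one {s : ℝ} (hs1 : -1 < s) (hs0 : s < 0) :
    ∫ t in Ioi 0, ((t ^ (s - 1) : ℝ) : ℂ) * (cexp (I * t) - 1)
      = Gamma s * cexp (I * (Real.pi * s / 2)) := by
  have hdamped : Tendsto (fun ε : ℝ => ∫ t in Ioi 0,
      ((t ^ (s - 1) : ℝ) : ℂ) * (cexp (-(ε * t)) * (cexp (I * t) - 1))) (𝓝[>] 0)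
      (𝓝 (∫ t in Ioi 0, ((t ^ (s - 1) : ℝ) : ℂ) * (cexp (I * t) - 1))) := by
    refine tendsto_integral_filter_of_dominated_convergence _ (.of_forall fun ε => by fun_prop)
      ?_ (integrableOn_rpow_sub_one_mul_min hs1 hs0) (.of_forall fun t => ?_)
    · filter_upwards [self_mem_nhdsWithin] with ε (hε : 0 < ε)
      filter_upwards [ae_restrict_mem measurableSet_Ioi] with t (ht : 0 < t)
      exact norm_rpow_mul_cexp_neg_mul_mul_cexp_I_sub_one_le hε.le ht.le
    · refine tendsto_nhdsWithin_of_tendsto_nhds ?_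
      simpa using ((continuous_ofReal.mul continuous_const).neg.cexp.tendsto 0).mul_const
        (cexp (I * t) - 1) |>.const_mul ((t ^ (s - 1) : ℝ) : ℂ)
  refine tendsto_nhds_unique hdamped
    (((tendsto_ofReal_sub_I_cpow_sub_ofReal_cpow hs0).const_mul (Gamma s)).congr' ?_)
  exact eventually_nhdsWithin_of_forall fun ε (hε : 0 < ε) =>
    (integral_rpow_sub_one_mul_cexp_neg_mul_mul_cexp_I_sub_one hs1 hs0 hε).symm

lemma integral_eq_two_mul_re_integral_Ioi {f : ℝ → ℂ} (hf : Integrable f)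
    (hconj : ∀ x, f (-x) = conj (f x)) :
    ∫ x, f x = 2 * ((∫ x in Ioi 0, f x).re : ℂ) := by
  have hIic : ∫ x in Iic 0, f x = conj (∫ x in Ioi 0, f x) := by
    rw [← integral_conj, ← neg_zero, ← integral_comp_neg_Ioi, neg_zero]
    exact setIntegral_congr_fun measurableSet_Ioi fun x _ => hconj x
  rw [← integral_add_compl measurableSet_Ioi hf, compl_Ioi, hIic, add_conj, ofReal_mul,
    ofReal_ofNat]

/-- For `c = θ ^ (1 + α)` this is the integrand after the substitution `x = u / θ`. -/
noncomputable def paretoIntegrand (q : ℕ) (α c : ℝ) (u : ℝ) : ℂ :=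
  (u : ℂ) ^ q * (cexp (I * u) - 1) / ((c + |u| ^ (1 + α) : ℝ) : ℂ)

section paretoIntegrand

variable {q : ℕ} {α c : ℝ}

lemma paretoIntegrand_apply_zero : paretoIntegrand q α c 0 = 0 := by
  simp [paretoIntegrand]

lemma norm_paretoIntegrand_le (hc : 0 ≤ c) (u : ℝ) :
    ‖paretoIntegrand q α c u‖ ≤ |u| ^ ((q - α : ℝ) - 1) * min 2 |u| := by
  rcases eq_or_ne u 0 with rfl | hu
  · simp [paretoIntegrand_apply_zero]
  have hu' : 0 < |u| := abs_pos.2 hu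
  rw [paretoIntegrand, norm_div, norm_mul, norm_real, norm_pow, norm_real, Real.norm_eq_abs,
    Real.norm_of_nonneg (by positivity), div_le_iff₀ (by positivity)]
  calc |u| ^ q * ‖cexp (I * u) - 1‖ ≤ |u| ^ q * min 2 |u| := by
        gcongr; exact norm_cexp_I_mul_sub_one_le_min u
    _ = |u| ^ ((q - α : ℝ) - 1) * min 2 |u| * |u| ^ (1 + α) := by
        rw [mul_right_comm, ← Real.rpow_add hu', ← Real.rpow_natCast]; ring_nf
    _ ≤ |u| ^ ((q - α : ℝ) - 1) * min 2 |u| * (c + |u| ^ (1 + α)) := by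
        gcongr; linarith

lemma aestronglyMeasurable_paretoIntegrand : AEStronglyMeasurable (paretoIntegrand q α c) :=
  (by unfold paretoIntegrand; fun_prop : Measurable (paretoIntegrand q α c)).aestronglyMeasurable

lemma integrable_paretoIntegrand (hs1 : -1 < (q - α : ℝ)) (hs0 : (q - α : ℝ) < 0)
    (hc : 0 ≤ c) : Integrable (paretoIntegrand q α c) :=
  (integrable_comp_abs (integrableOn_rpow_sub_one_mul_min hs1 hs0)).mono'
    aestronglyMeasurable_paretoIntegrand (.of_forall (norm_paretoIntegrand_le hc))

lemma paretoIntegrand_zero_apply_of_pos {u : ℝ} (hu : 0 < u) :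
    paretoIntegrand q α 0 u = ((u ^ ((q - α : ℝ) - 1) : ℝ) : ℂ) * (cexp (I * u) - 1) := by
  rw [paretoIntegrand, zero_add, abs_of_pos hu, Real.rpow_sub_one hu.ne', Real.rpow_sub hu,
    Real.rpow_natCast, Real.rpow_add hu, Real.rpow_one]
  push_cast
  field_simp

lemma paretoIntegrand_neg (hq : Even q) (u : ℝ) :
    paretoIntegrand q α c (-u) = conj (paretoIntegrand q α c u) := by
  simp only [paretoIntegrand, map_div₀, map_mul, map_pow, map_sub, map_one, conj_ofReal,
    ← exp_conj, conj_I, abs_neg, ofReal_neg, hq.neg_pow]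
  ring_nf

lemma integral_paretoIntegrand_zero (hq : Even q) (hs1 : -1 < (q - α : ℝ))
    (hs0 : (q - α : ℝ) < 0) :
    ∫ u, paretoIntegrand q α 0 u
      = ((2 * Real.Gamma (q - α) * Real.cos ((q - α) * Real.pi / 2) : ℝ) : ℂ) := by
  rw [integral_eq_two_mul_re_integral_Ioi (integrable_paretoIntegrand hs1 hs0 le_rfl)
    (paretoIntegrand_neg hq), setIntegral_congr_fun measurableSet_Ioi
    fun u hu => paretoIntegrand_zero_apply_of_pos hu,
    integral_rpow_sub_one_mul_cexp_I_sub_one hs1 hs0,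
    Gamma_ofReal,
    show I * (Real.pi * ((q - α : ℝ) : ℂ) / 2) = (((q - α) * Real.pi / 2 : ℝ) : ℂ) * I by
      push_cast; ring, re_ofReal_mul, exp_ofReal_mul_I_re]
  push_cast
  ring

lemma tendsto_integral_paretoIntegrand (hs1 : -1 < (q - α : ℝ)) (hs0 : (q - α : ℝ) < 0) :
    Tendsto (fun c => ∫ u, paretoIntegrand q α c u) (𝓝[≥] 0)
      (𝓝 (∫ u, paretoIntegrand q α 0 u)) := by
  refine tendsto_integral_filter_of_dominated_convergence _
    (.of_forall fun _ => aestronglyMeasurable_paretoIntegrand)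
    (eventually_nhdsWithin_of_forall fun c hc => .of_forall (norm_paretoIntegrand_le hc))
    (integrable_comp_abs (integrableOn_rpow_sub_one_mul_min hs1 hs0)) (.of_forall fun u => ?_)
  rcases eq_or_ne u 0 with rfl | hu
  · simp only [paretoIntegrand_apply_zero, tendsto_const_nhds]
  have hden : (((0 : ℝ) + |u| ^ (1 + α) : ℝ) : ℂ) ≠ 0 := by
    rw [zero_add]; exact ofReal_ne_zero.2 (Real.rpow_pos_of_pos (abs_pos.2 hu) _).ne'
  refine tendsto_nhdsWithin_of_tendsto_nhds (tendsto_const_nhds.div ?_ hden)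
  exact (by fun_prop : Continuous fun c : ℝ => ((c + |u| ^ (1 + α) : ℝ) : ℂ)).tendsto 0

lemma integral_eq_rpow_mul_integral_paretoIntegrand {θ : ℝ} (hθ : 0 < θ) :
    ∫ x : ℝ, (x : ℂ) ^ q * (cexp (I * θ * x) - 1) / ((1 + |x| ^ (1 + α) : ℝ) : ℂ)
      = ((θ ^ (α - q) : ℝ) : ℂ) * ∫ u, paretoIntegrand q α (θ ^ (1 + α)) u := by
  have hpt : ∀ x : ℝ, (x : ℂ) ^ q * (cexp (I * θ * x) - 1) / ((1 + |x| ^ (1 + α) : ℝ) : ℂ)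
      = ((θ ^ (α - q) * θ : ℝ) : ℂ) * paretoIntegrand q α (θ ^ (1 + α)) (θ * x) := by
    intro x
    have habs : |θ * x| ^ (1 + α) = θ ^ (1 + α) * |x| ^ (1 + α) := by
      rw [abs_mul, abs_of_pos hθ, Real.mul_rpow hθ.le (abs_nonneg x)]
    have hexp : θ ^ (α - q) * θ * θ ^ q = θ ^ (1 + α) := by
      rw [← Real.rpow_natCast, ← Real.rpow_add_one hθ.ne', ← Real.rpow_add hθ]; ring_nf
    have hθ' : (θ : ℂ) ≠ 0 := ofReal_ne_zero.2 hθ.ne'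
    have hpow : ((θ ^ (α - q) : ℝ) : ℂ) ≠ 0 := ofReal_ne_zero.2 (Real.rpow_pos_of_pos hθ _).ne'
    have hx : ((1 + |x| ^ (1 + α) : ℝ) : ℂ) ≠ 0 := ofReal_ne_zero.2 (by positivity)
    rw [paretoIntegrand, habs, ← mul_one_add, ← hexp]
    push_cast at hx ⊢
    field_simp
    ring_nf
  simp_rw [hpt]
  rw [integral_const_mul, Measure.integral_comp_mul_left, abs_inv, abs_of_pos hθ, real_smul,
    ← mul_assoc, ofReal_inv, ofReal_mul, mul_assoc _ (θ : ℂ),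
    mul_inv_cancel₀ (ofReal_ne_zero.2 hθ.ne'), mul_one]

end paretoIntegrand

lemma tendsto_rpow_nhdsGT_zero_nhdsGE {y : ℝ} (hy : 0 < y) :
    Tendsto (fun x : ℝ => x ^ y) (𝓝[>] 0) (𝓝[≥] 0) :=
  tendsto_nhdsWithin_iff.2 ⟨tendsto_rpow_nhdsGT_zero hy,
    eventually_nhdsWithin_of_forall fun _ hx => Real.rpow_nonneg (le_of_lt hx) y⟩

lemma Gamma_mul_cos_ne_zero {s : ℝ} (hs1 : -1 < s) (hs0 : s < 0) :
    Real.Gamma s * Real.cos (s * Real.pi / 2) ≠ 0 := by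
  refine mul_ne_zero (Real.Gamma_ne_zero fun m => ?_) (Real.cos_pos_of_mem_Ioo ⟨?_, ?_⟩).ne'
  · rcases m with _ | m
    · simpa using hs0.ne
    · push_cast; linarith
  · nlinarith [Real.pi_pos]
  · nlinarith [Real.pi_pos]

end ParetoEvenPart

open ParetoEvenPart Complex in
/-- For non-integer `α > 2` with `q = ⌊α⌋` even, as `θ → 0⁺`,
`∫ x, x^q (e^{iθx} - 1) / (1 + |x|^(1+α)) dx ∼ 2 θ^(α-q) Γ(q-α) cos((q-α)π/2)`. -/
theorem pareto_noninteger_evenpart_integral_asymptotic (α : ℝ) (hα : 2 < α)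
    (hnotint : ∀ m : ℤ, (m : ℝ) ≠ α) (heven : Even ⌊α⌋) :
    Tendsto (fun θ : ℝ =>
        (∫ x : ℝ, ((x : ℂ) ^ ⌊α⌋.toNat * (Complex.exp (Complex.I * θ * x) - 1)) /
            ((1 + |x| ^ (1 + α) : ℝ) : ℂ)) /
          ((2 * θ ^ (α - (⌊α⌋ : ℝ)) * Real.Gamma ((⌊α⌋ : ℝ) - α) *
              Real.cos (((⌊α⌋ : ℝ) - α) * Real.pi / 2) : ℝ) : ℂ))
      (nhdsWithin 0 (Set.Ioi 0)) (nhds 1) := by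
  set q := ⌊α⌋.toNat
  have hqZ : (q : ℤ) = ⌊α⌋ := Int.toNat_of_nonneg (Int.floor_nonneg.2 (by linarith))
  have hq : ((⌊α⌋ : ℤ) : ℝ) = q := by exact_mod_cast hqZ.symm
  have hs0 : (q - α : ℝ) < 0 := by
    rw [← hq]; exact sub_neg.2 ((Int.floor_le α).lt_of_ne (hnotint _))
  have hs1 : -1 < (q - α : ℝ) := by rw [← hq]; linarith [Int.lt_floor_add_one α]
  have hL := Gamma_mul_cos_ne_zero hs1 hs0
  have hlim := ((tendsto_integral_paretoIntegrand hs1 hs0).comp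
    (tendsto_rpow_nhdsGT_zero_nhdsGE (y := 1 + α) (by linarith))).div_const
      (((2 * Real.Gamma (q - α) * Real.cos ((q - α) * Real.pi / 2)) : ℝ) : ℂ)
  rw [integral_paretoIntegrand_zero ((Int.even_coe_nat q).1 (hqZ ▸ heven)) hs1 hs0,
    div_self (ofReal_ne_zero.2 (by simpa [mul_assoc] using hL))] at hlim
  rw [hq]
  refine hlim.congr' (eventually_nhdsWithin_of_forall fun θ (hθ : 0 < θ) => ?_)
  rw [Function.comp_apply]
  beta_reduce
  rw [integral_eq_rpow_mul_integral_paretoIntegrand hθ,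
    show (2 * θ ^ (α - q) * Real.Gamma (q - α) * Real.cos ((q - α) * Real.pi / 2) : ℝ)
      = θ ^ (α - q) * (2 * Real.Gamma (q - α) * Real.cos ((q - α) * Real.pi / 2)) by ring,
    ofReal_mul (θ ^ (α - q)),
    mul_div_mul_left _ _ (ofReal_ne_zero.2 (Real.rpow_pos_of_pos hθ _).ne')]
end

section
/- Let α ≥ 3 be an odd integer. Then for every x ∈ ℝ, ∫_{-∞}^{∞} e^{−iθx − θ²/2} |θ|^α dθ = 2√2 (−1)^{(α−1)/2} (d^α/dx^α) D(x/√2), where the right-hand side is the α-th derivative with respect to x of the function x ↦ D(x/√2) and D(z) = e^{−z²} ∫_0^z e^{t²} dt is Dawson's integral. -/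
/-!
Put `E k x = ∫₀^∞ tᵏ e^{-t²/2} e^{ixt} dt`. Differentiation under the integral sign gives
`E k' = i E (k+1)`, and an integration by parts gives `E 1 = 1 + ix E 0`. Hence `g = Im (E 0)`
solves `g' = 1 - x g` with `g 0 = 0`, i.e. `g x = e^{-x²/2} ∫₀ˣ e^{s²/2} ds = √2 D(x/√2)`, and the
`n`-th derivative of `D(x/√2)` is `Im (iⁿ E n x) / √2`. The integrand of the theorem is
conjugate-symmetric, so the integral is `2 Re (E α x)`, and for `α = 2m+1` we have
`Im (i^α z) = (-1)^m Re z`.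
-/

open MeasureTheory Filter

/-- Dawson's integral `D(z) = e^{-z²} ∫_0^z e^{t²} dt`. -/
noncomputable def dawson (z : ℝ) : ℝ := Real.exp (-z ^ 2) * ∫ t in (0 : ℝ)..z, Real.exp (t ^ 2)

open Set ComplexConjugate

theorem integrable_abs_pow_mul_exp_neg_sq_div_two (k : ℕ) :
    Integrable fun t : ℝ => |t| ^ k * Real.exp (-t ^ 2 / 2) := by
  have h := integrable_rpow_mul_exp_neg_mul_sq (b := 1 / 2) (by norm_num) (s := k)
    (by linarith [k.cast_nonneg (α := ℝ)])
  refine h.abs.congr (.of_forall fun t => ?_)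
  simp only [Real.rpow_natCast, abs_mul, abs_pow, Real.abs_exp]
  ring_nf

theorem integral_eq_two_mul_re_setIntegral_Ioi_comp_neg {f : ℝ → ℂ} (hf : Integrable f)
    (hconj : ∀ t, f t = conj (f (-t))) :
    ∫ t, f t = ((2 * (∫ t in Ioi 0, f (-t)).re : ℝ) : ℂ) := by
  have hIoi : ∫ t in Ioi (0 : ℝ), f t = conj (∫ t in Ioi 0, f (-t)) := by
    rw [← integral_conj]
    exact integral_congr_ae (.of_forall hconj)
  rw [← intervalIntegral.integral_Iic_add_Ioi hf.integrableOn hf.integrableOn, hIoi,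
    integral_comp_neg_Ioi, neg_zero, Complex.add_conj]

noncomputable def halfGaussianKernel (k : ℕ) (x t : ℝ) : ℂ :=
  (t : ℂ) ^ k * Complex.exp (Complex.I * x * t - t ^ 2 / 2)

noncomputable def halfGaussianFourier (k : ℕ) (x : ℝ) : ℂ :=
  ∫ t in Ioi 0, halfGaussianKernel k x t

theorem norm_halfGaussianKernel (k : ℕ) (x t : ℝ) :
    ‖halfGaussianKernel k x t‖ = |t| ^ k * Real.exp (-t ^ 2 / 2) := by
  rw [halfGaussianKernel, norm_mul, norm_pow, Complex.norm_real, Real.norm_eq_abs,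
    Complex.norm_exp]
  congr 2
  simp [pow_two]
  ring

theorem continuous_halfGaussianKernel (k : ℕ) (x : ℝ) : Continuous (halfGaussianKernel k x) := by
  unfold halfGaussianKernel; fun_prop

theorem integrable_halfGaussianKernel (k : ℕ) (x : ℝ) : Integrable (halfGaussianKernel k x) :=
  (integrable_abs_pow_mul_exp_neg_sq_div_two k).mono'
    (continuous_halfGaussianKernel k x).aestronglyMeasurable
    (.of_forall fun t => (norm_halfGaussianKernel k x t).le)

theorem hasDerivAt_halfGaussianKernel (k : ℕ) (x t : ℝ) :
    HasDerivAt (fun y => halfGaussianKernel k y t)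
      (Complex.I * halfGaussianKernel (k + 1) x t) x := by
  have h : HasDerivAt (fun w : ℂ => Complex.I * w * t - t ^ 2 / 2) (Complex.I * t) x := by
    simpa using (((hasDerivAt_id (x : ℂ)).const_mul Complex.I).mul_const (t : ℂ)).sub_const
      ((t : ℂ) ^ 2 / 2)
  refine (h.cexp.const_mul ((t : ℂ) ^ k)).comp_ofReal.congr_deriv ?_
  simp only [halfGaussianKernel]
  ring

theorem hasDerivAt_halfGaussianFourier (k : ℕ) (x : ℝ) :
    HasDerivAt (halfGaussianFourier k) (Complex.I * halfGaussianFourier (k + 1) x) x := by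
  have h := hasDerivAt_integral_of_dominated_loc_of_deriv_le (μ := volume.restrict (Ioi 0))
    (F' := fun y t => Complex.I * halfGaussianKernel (k + 1) y t)
    (bound := fun t => |t| ^ (k + 1) * Real.exp (-t ^ 2 / 2)) univ_mem
    (.of_forall fun y => (continuous_halfGaussianKernel k y).aestronglyMeasurable)
    (integrable_halfGaussianKernel k x).integrableOn
    ((continuous_halfGaussianKernel (k + 1) x).const_smul Complex.I).aestronglyMeasurable
    (.of_forall fun t y _ => by rw [norm_mul, Complex.norm_I, one_mul, norm_halfGaussianKernel])
    (integrable_abs_pow_mul_exp_neg_sq_div_two (k + 1)).integrableOn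
    (.of_forall fun t y _ => hasDerivAt_halfGaussianKernel k y t)
  rw [halfGaussianFourier, ← integral_const_mul]
  exact h.2

theorem halfGaussianFourier_one (x : ℝ) :
    halfGaussianFourier 1 x = 1 + Complex.I * x * halfGaussianFourier 0 x := by
  set F : ℝ → ℂ := fun t => -halfGaussianKernel 0 x t
  have hF : ∀ t : ℝ, HasDerivAt F
      (halfGaussianKernel 1 x t - Complex.I * x * halfGaussianKernel 0 x t) t := by
    intro t
    have h : HasDerivAt (fun w : ℂ => Complex.I * x * w - w ^ 2 / 2) (Complex.I * x - t) t := by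
      refine (((hasDerivAt_id (t : ℂ)).const_mul (Complex.I * x)).sub
        ((hasDerivAt_pow 2 (t : ℂ)).div_const 2)).congr_deriv ?_
      simp
    refine (h.cexp.neg.comp_ofReal.congr_of_eventuallyEq
      (.of_forall fun t => by simp [F, halfGaussianKernel])).congr_deriv ?_
    simp only [halfGaussianKernel]
    ring
  have hF_tendsto : Tendsto F atTop (nhds 0) := by
    rw [tendsto_zero_iff_norm_tendsto_zero]
    simp only [F, norm_neg, norm_halfGaussianKernel, pow_zero, one_mul]
    exact Real.tendsto_exp_atBot.comp <| (tendsto_neg_atTop_atBot.comp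
      (tendsto_pow_atTop two_ne_zero)).atBot_div_const two_pos
  have h := integral_Ioi_of_hasDerivAt_of_tendsto' (a := 0) (fun t _ => hF t)
    ((integrable_halfGaussianKernel 1 x).sub
      ((integrable_halfGaussianKernel 0 x).const_mul _)).integrableOn hF_tendsto
  rw [integral_sub (integrable_halfGaussianKernel 1 x).integrableOn
    ((integrable_halfGaussianKernel 0 x).const_mul _).integrableOn, integral_const_mul] at h
  have hF0 : F 0 = -1 := by simp [F, halfGaussianKernel]
  rw [hF0] at h
  rw [halfGaussianFourier, halfGaussianFourier]
  linear_combination h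

theorem iteratedDeriv_im_halfGaussianFourier_zero (n : ℕ) :
    iteratedDeriv n (fun y => (halfGaussianFourier 0 y).im) =
      fun x => (Complex.I ^ n * halfGaussianFourier n x).im := by
  induction n with
  | zero => simp
  | succ n ih =>
    rw [iteratedDeriv_succ, ih]
    funext x
    have h : HasDerivAt (fun y => (Complex.I ^ n * halfGaussianFourier n y).im)
        (Complex.I ^ n * (Complex.I * halfGaussianFourier (n + 1) x)).im x :=
      Complex.imCLM.hasFDerivAt.comp_hasDerivAt x
        ((hasDerivAt_halfGaussianFourier n x).const_mul _)
    rw [h.deriv, pow_succ, mul_assoc]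

theorem hasDerivAt_im_halfGaussianFourier_zero (x : ℝ) :
    HasDerivAt (fun y => (halfGaussianFourier 0 y).im)
      (1 - x * (halfGaussianFourier 0 x).im) x := by
  have h : HasDerivAt (fun y => (halfGaussianFourier 0 y).im)
      (Complex.I * halfGaussianFourier 1 x).im x :=
    Complex.imCLM.hasFDerivAt.comp_hasDerivAt x (hasDerivAt_halfGaussianFourier 0 x)
  refine h.congr_deriv ?_
  simp [halfGaussianFourier_one, sub_eq_add_neg]

theorem im_halfGaussianFourier_zero_zero : (halfGaussianFourier 0 0).im = 0 := by
  have h : ∀ t : ℝ, halfGaussianKernel 0 0 t = (Real.exp (-t ^ 2 / 2) : ℂ) := fun t => by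
    simp [halfGaussianKernel, Complex.ofReal_exp, neg_div]
  simp only [halfGaussianFourier, h, integral_complex_ofReal, Complex.ofReal_im]

theorem exp_mul_im_halfGaussianFourier_zero (x : ℝ) :
    Real.exp (x ^ 2 / 2) * (halfGaussianFourier 0 x).im =
      ∫ s in (0 : ℝ)..x, Real.exp (s ^ 2 / 2) := by
  set φ : ℝ → ℝ := fun y => Real.exp (y ^ 2 / 2) * (halfGaussianFourier 0 y).im -
    ∫ s in (0 : ℝ)..y, Real.exp (s ^ 2 / 2)
  have hφ : ∀ y, HasDerivAt φ 0 y := by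
    intro y
    have hexp : HasDerivAt (fun y : ℝ => Real.exp (y ^ 2 / 2)) (Real.exp (y ^ 2 / 2) * y) y := by
      refine ((hasDerivAt_pow 2 y).div_const 2).exp.congr_deriv ?_
      ring
    have hint : HasDerivAt (fun y => ∫ s in (0 : ℝ)..y, Real.exp (s ^ 2 / 2))
        (Real.exp (y ^ 2 / 2)) y :=
      ((by fun_prop : Continuous fun s : ℝ => Real.exp (s ^ 2 / 2)).integral_hasStrictDerivAt
        0 y).hasDerivAt
    refine ((hexp.mul (hasDerivAt_im_halfGaussianFourier_zero y)).sub hint).congr_deriv ?_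
    ring
  have h := is_const_of_deriv_eq_zero (fun y => (hφ y).differentiableAt)
    (fun y => (hφ y).deriv) x 0
  simpa [φ, im_halfGaussianFourier_zero_zero, sub_eq_zero] using h

theorem dawson_div_sqrt_two (x : ℝ) :
    dawson (x / √2) = (√2)⁻¹ * (halfGaussianFourier 0 x).im := by
  have hsq : ∀ s : ℝ, (s / √2) ^ 2 = s ^ 2 / 2 := fun s => by
    rw [div_pow, Real.sq_sqrt zero_le_two]
  have hsub := intervalIntegral.integral_comp_div (fun u => Real.exp (u ^ 2)) (a := 0) (b := x)
    (Real.sqrt_ne_zero'.2 two_pos)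
  simp only [hsq, zero_div, smul_eq_mul] at hsub
  have key := exp_mul_im_halfGaussianFourier_zero x
  rw [hsub] at key
  rw [dawson, hsq, Real.exp_neg]
  field_simp
  linear_combination -key

theorem integral_cexp_mul_abs_pow (k : ℕ) (x : ℝ) :
    ∫ θ : ℝ, Complex.exp (-(Complex.I * θ * x) - θ ^ 2 / 2) * ((|θ| ^ k : ℝ) : ℂ) =
      ((2 * (halfGaussianFourier k x).re : ℝ) : ℂ) := by
  set f : ℝ → ℂ := fun θ => Complex.exp (-(Complex.I * θ * x) - θ ^ 2 / 2) * ((|θ| ^ k : ℝ) : ℂ)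
  have hnorm : ∀ θ, ‖f θ‖ = |θ| ^ k * Real.exp (-θ ^ 2 / 2) := fun θ => by
    simp [f, Complex.norm_exp, pow_two, mul_comm, neg_div]
  have hf : Integrable f :=
    (integrable_abs_pow_mul_exp_neg_sq_div_two k).mono' (by fun_prop)
      (.of_forall fun θ => (hnorm θ).le)
  have hconj : ∀ θ, f θ = conj (f (-θ)) := fun θ => by
    simp [f, ← Complex.exp_conj, map_ofNat]
  have hIoi : ∀ t ∈ Ioi (0 : ℝ), f (-t) = halfGaussianKernel k x t := fun t ht => by
    simp only [f, halfGaussianKernel, abs_neg, abs_of_pos (mem_Ioi.1 ht)]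
    push_cast
    ring_nf
  rw [integral_eq_two_mul_re_setIntegral_Ioi_comp_neg hf hconj,
    setIntegral_congr_fun measurableSet_Ioi hIoi]
  rfl

theorem iteratedDeriv_dawson_div_sqrt_two (n : ℕ) (x : ℝ) :
    iteratedDeriv n (fun y => dawson (y / √2)) x =
      (√2)⁻¹ * (Complex.I ^ n * halfGaussianFourier n x).im := by
  simp only [dawson_div_sqrt_two, iteratedDeriv_const_mul_field,
    iteratedDeriv_im_halfGaussianFourier_zero]

theorem im_I_pow_two_mul_add_one_mul (m : ℕ) (z : ℂ) :
    (Complex.I ^ (2 * m + 1) * z).im = (-1) ^ m * z.re := by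
  rw [pow_succ, pow_mul, Complex.I_sq, mul_comm _ Complex.I, mul_assoc, Complex.I_mul_im,
    show (-1 : ℂ) ^ m = ((-1 : ℝ) ^ m : ℝ) by push_cast; rfl, Complex.re_ofReal_mul]

theorem gaussian_abs_pow_fourier_odd_general (α : ℕ) (hodd : Odd α) (x : ℝ) :
    ∫ θ : ℝ, Complex.exp (-(Complex.I * θ * x) - θ ^ 2 / 2) * ((|θ| ^ α : ℝ) : ℂ) =
      ((2 * Real.sqrt 2 * (-1 : ℝ) ^ ((α - 1) / 2) *
          iteratedDeriv α (fun y : ℝ => dawson (y / Real.sqrt 2)) x : ℝ) : ℂ) := by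
  obtain ⟨m, rfl⟩ := hodd
  rw [integral_cexp_mul_abs_pow, iteratedDeriv_dawson_div_sqrt_two, im_I_pow_two_mul_add_one_mul,
    show (2 * m + 1 - 1) / 2 = m by omega]
  congr 1
  field_simp
  simp [← pow_mul]

/-- for odd `α ≥ 3` and every `x ∈ ℝ`,
`∫ θ, e^{-iθx - θ²/2} |θ|^α dθ = 2√2 (-1)^((α-1)/2) (d^α/dx^α) D(x/√2)`. -/
theorem gaussian_abs_pow_fourier_odd (α : ℕ) (hα : 3 ≤ α) (hodd : Odd α) (x : ℝ) :
    ∫ θ : ℝ, Complex.exp (-(Complex.I * θ * x) - θ ^ 2 / 2) * ((|θ| ^ α : ℝ) : ℂ) =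
      ((2 * Real.sqrt 2 * (-1 : ℝ) ^ ((α - 1) / 2) *
          iteratedDeriv α (fun y : ℝ => dawson (y / Real.sqrt 2)) x : ℝ) : ℂ) :=
  gaussian_abs_pow_fourier_odd_general α hodd x
end
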